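/- Let H be a graph on n vertices containing an odd cycle, with ℓ the length of a shortest odd cycle of H, and let G = W(H). If ⌈ℓ/2⌉ ≤ q ≤ n − ⌊ℓ/2⌋, then MF^q(G) is not pure: it has facets of cardinality n + q − 1 and also a facet of cardinality at most n + q − 2. -/

import Mathlib

variable {V : Type*}

/-- `M` is a set of pairwise disjoint edges of `G` with all endpoints in `F`. -/
def IsMatchingOn (G : SimpleGraph V) (F : Finset V) (M : Finset (Sym2 V)) : Prop :=
  (∀ e ∈ M, e ∈ G.edgeSet) ∧
  (∀ e ∈ M, ∀ v ∈ e, v ∈ F) ∧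
  (∀ e ∈ M, ∀ e' ∈ M, e ≠ e' → ∀ v ∈ e, v ∉ e')

/-- `F` is a face of the `q`-matching-free complex `MF^q(G)`. -/
def MFFace (G : SimpleGraph V) (q : ℕ) (F : Finset V) : Prop :=
  ¬ ∃ M : Finset (Sym2 V), IsMatchingOn G F M ∧ M.card = q

/-- `F` is a facet (maximal face) of the complex with face predicate `faces`. -/
def IsFacet (faces : Finset V → Prop) (F : Finset V) : Prop :=
  faces F ∧ ∀ F', faces F' → F ⊆ F' → F = F'

/-- Even-connection of `u` and `v` with respect to the pairwise disjoint edges in `M`. -/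
def EvenConnected (G : SimpleGraph V) (M : Finset (Sym2 V)) (u v : V) : Prop :=
  ∃ (r : ℕ) (p : ℕ → V), 1 ≤ r ∧ p 0 = u ∧ p (2 * r + 1) = v ∧
    (∀ k, k ≤ 2 * r → G.Adj (p k) (p (k + 1))) ∧
    (∀ k, k < r → s(p (2 * k + 1), p (2 * k + 2)) ∈ M) ∧
    (∀ k l, k < r → l < r →
      s(p (2 * k + 1), p (2 * k + 2)) = s(p (2 * l + 1), p (2 * l + 2)) → k = l)

/-- The set of vertices covered by the edges in `M`. -/
def mSupp (M : Finset (Sym2 V)) : Set V := {v | ∃ e ∈ M, v ∈ e}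

/-- The even-connection graph `G^{e₁⋯e_q}` (vertices covered by `M` are isolated). -/
def evenConnGraph (G : SimpleGraph V) (M : Finset (Sym2 V)) : SimpleGraph V where
  Adj x y := x ≠ y ∧ x ∉ mSupp M ∧ y ∉ mSupp M ∧
    (G.Adj x y ∨ EvenConnected G M x y ∨ EvenConnected G M y x)
  symm := by
    constructor
    rintro x y ⟨hne, hx, hy, h⟩
    refine ⟨hne.symm, hy, hx, ?_⟩
    rcases h with h | h | h
    · exact Or.inl h.symm
    · exact Or.inr (Or.inr h)
    · exact Or.inr (Or.inl h)
  loopless := ⟨fun x h => h.1 rfl⟩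

/-- Delete a set of vertices from a graph (keeping them as isolated vertices). -/
def delSet (G : SimpleGraph V) (S : Set V) : SimpleGraph V where
  Adj x y := G.Adj x y ∧ x ∉ S ∧ y ∉ S
  symm := ⟨fun x y ⟨h, hx, hy⟩ => ⟨h.symm, hy, hx⟩⟩
  loopless := ⟨fun x ⟨h, _, _⟩ => G.irrefl h⟩

/-- The whisker graph `W(H)`: each vertex `x` (as `Sum.inl x`) gets a pendant
whisker vertex `Sum.inr x`. -/
def whisker (H : SimpleGraph V) : SimpleGraph (V ⊕ V) where
  Adj x y :=
    (∃ a b, x = Sum.inl a ∧ y = Sum.inl b ∧ H.Adj a b) ∨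
    (∃ a, (x = Sum.inl a ∧ y = Sum.inr a) ∨ (x = Sum.inr a ∧ y = Sum.inl a))
  symm := by
    constructor
    rintro x y (⟨a, b, hx, hy, hab⟩ | ⟨a, h | h⟩)
    · exact Or.inl ⟨b, a, hy, hx, hab.symm⟩
    · exact Or.inr ⟨a, Or.inr ⟨h.2, h.1⟩⟩
    · exact Or.inr ⟨a, Or.inl ⟨h.2, h.1⟩⟩
  loopless := by
    constructor
    rintro x (⟨a, b, hx, hy, hab⟩ | ⟨a, ⟨h1, h2⟩ | ⟨h1, h2⟩⟩)
    · obtain rfl := Sum.inl_injective (hx ▸ hy : (Sum.inl a : V ⊕ V) = Sum.inl b)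
      exact H.irrefl hab
    · exact Sum.inl_ne_inr (h1 ▸ h2 : (Sum.inl a : V ⊕ V) = Sum.inr a)
    · exact Sum.inr_ne_inl (h1 ▸ h2 : (Sum.inr a : V ⊕ V) = Sum.inl a)

/-- Shellability of the complex with face predicate `faces`: there is a linear
order `F 0, F 1, …` of all facets such that each facet meets the union of the
previous ones in a pure subcomplex of codimension one. -/
def Shellable (faces : Finset V → Prop) : Prop :=
  ∃ (t : ℕ) (F : Fin t → Finset V),
    (∀ i, IsFacet faces (F i)) ∧
    (∀ F', IsFacet faces F' → ∃ i, F' = F i) ∧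
    Function.Injective F ∧
    ∀ k : Fin t, 0 < (k : ℕ) → ∀ σ : Finset V, σ ⊆ F k →
      (∃ i, i < k ∧ σ ⊆ F i) →
      ∃ τ : Finset V, σ ⊆ τ ∧ τ ⊆ F k ∧ (∃ i, i < k ∧ τ ⊆ F i) ∧
        τ.card = (F k).card - 1

/-- Vertex decomposability of the complex with face predicate `faces`. -/
inductive VertexDecomposable [DecidableEq V] : (Finset V → Prop) → Prop
  | simplex (faces : Finset V → Prop) (F : Finset V)
      (h : ∀ F', faces F' ↔ F' ⊆ F) : VertexDecomposable faces
  | shed (faces : Finset V → Prop) (v : V)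
      (hdel : VertexDecomposable (fun F => faces F ∧ v ∉ F))
      (hlink : VertexDecomposable (fun F => v ∉ F ∧ faces (insert v F)))
      (hshed : ∀ F, v ∉ F → faces (insert v F) →
        ¬ IsFacet (fun F' => faces F' ∧ v ∉ F') F) :
      VertexDecomposable faces

/-!
Every edge of `W(H)` meets `V(H)`, so `q - 1` vertices `S` of `H` together with all whiskers,
`S ⊔ V`, span no `q`-matching, while adding any vertex of `H` makes room for `q` whisker edges:
a facet of size `n + q - 1`. For a cycle `C` of odd length `2t + 1` and a set `S` of `q - 1 - t`
vertices off `C`, take `(S ∪ C) ⊔ (V \ C)`. A matching inside it has at most `|S|` edges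
through `S` and at most `t` edges inside `C`. Adding a vertex `x ∉ S ∪ C`, or the whisker of some
`x ∈ C`, allows the whisker edges over `S ∪ {x}` together with a perfect matching of the path
`C - x`, i.e. `q` edges. This facet has `n + q - 1 - t ≤ n + q - 2` vertices.
-/

open Finset

namespace IsMatchingOn

variable {G : SimpleGraph V} {F F' : Finset V} {M M' : Finset (Sym2 V)}

theorem mono (hM : IsMatchingOn G F M) (hF : F ⊆ F') : IsMatchingOn G F' M :=
  ⟨hM.1, fun e he v hv => hF (hM.2.1 e he v hv), hM.2.2⟩

theorem of_subset (hM : IsMatchingOn G F M) (hM' : M' ⊆ M)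
    (hF' : ∀ e ∈ M', ∀ v ∈ e, v ∈ F') : IsMatchingOn G F' M' :=
  ⟨fun e he => hM.1 e (hM' he), hF', fun e he e' he' => hM.2.2 e (hM' he) e' (hM' he')⟩

theorem disjoint (hM : IsMatchingOn G F M) (hM' : IsMatchingOn G F' M') (hF : Disjoint F F') :
    Disjoint M M' := by
  refine disjoint_left.mpr fun e he he' => ?_
  induction e using Sym2.ind with
  | _ x y =>
    exact disjoint_left.mp hF (hM.2.1 _ he x (Sym2.mem_mk_left x y))
      (hM'.2.1 _ he' x (Sym2.mem_mk_left x y))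

variable {W : Type*} [DecidableEq W] {G' : SimpleGraph W}

theorem map (f : G ↪g G') (hM : IsMatchingOn G F M) :
    IsMatchingOn G' (F.map f.toEmbedding) (M.image (Sym2.map f)) := by
  refine ⟨?_, ?_, ?_⟩
  · simp only [mem_image]
    rintro _ ⟨e, he, rfl⟩
    induction e using Sym2.ind with
    | _ x y => exact f.map_adj_iff.mpr (hM.1 _ he)
  · simp only [mem_image]
    rintro _ ⟨e, he, rfl⟩ _ hfv
    obtain ⟨v, hv, rfl⟩ := Sym2.mem_map.mp hfv
    exact mem_map_of_mem _ (hM.2.1 e he v hv)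
  · simp only [mem_image]
    rintro _ ⟨e, he, rfl⟩ _ ⟨e', he', rfl⟩ hne _ hfv hfv'
    obtain ⟨v, hv, rfl⟩ := Sym2.mem_map.mp hfv
    obtain ⟨v', hv', hvv'⟩ := Sym2.mem_map.mp hfv'
    obtain rfl := f.injective hvv'
    exact hM.2.2 e he e' he' (fun h => hne (h ▸ rfl)) _ hv hv'

variable [DecidableEq V]

theorem union (hM : IsMatchingOn G F M) (hM' : IsMatchingOn G F' M') (hF : Disjoint F F') :
    IsMatchingOn G (F ∪ F') (M ∪ M') := by
  refine ⟨fun e he => ?_, fun e he v hv => ?_, fun e he e' he' hne v hv hv' => ?_⟩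
  · rcases mem_union.mp he with he | he
    exacts [hM.1 e he, hM'.1 e he]
  · rcases mem_union.mp he with he | he
    exacts [mem_union_left _ (hM.2.1 e he v hv), mem_union_right _ (hM'.2.1 e he v hv)]
  · rcases mem_union.mp he with he | he <;> rcases mem_union.mp he' with he' | he'
    · exact hM.2.2 e he e' he' hne v hv hv'
    · exact disjoint_left.mp hF (hM.2.1 e he v hv) (hM'.2.1 e' he' v hv')
    · exact disjoint_left.mp hF (hM.2.1 e' he' v hv') (hM'.2.1 e he v hv)
    · exact hM'.2.2 e he e' he' hne v hv hv'

theorem card_filter_mem_le_one (hM : IsMatchingOn G F M) (v : V) :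
    #{e ∈ M | v ∈ e} ≤ 1 := by
  refine card_le_one.mpr fun e he e' he' => ?_
  rw [mem_filter] at he he'
  by_contra hne
  exact hM.2.2 e he.1 e' he'.1 hne v he.2 he'.2

theorem card_le_of_forall_exists_mem (hM : IsMatchingOn G F M) (A : Finset V)
    (hA : ∀ e ∈ M, ∃ a ∈ A, a ∈ e) : #M ≤ #A := by
  simpa using card_mul_le_card_mul (fun e a => a ∈ e) (m := 1) (n := 1)
    (fun e he => by
      obtain ⟨a, ha, hae⟩ := hA e he
      exact card_pos.mpr ⟨a, mem_filter.mpr ⟨ha, hae⟩⟩)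
    (fun v _ => hM.card_filter_mem_le_one v)

theorem two_mul_card_le (hM : IsMatchingOn G F M) : 2 * #M ≤ #F := by
  have hends : ∀ e ∈ M, 2 ≤ #(bipartiteAbove (fun e v => v ∈ e) F e) := by
    intro e he
    induction e using Sym2.ind with
    | _ x y =>
      have hxy : x ≠ y := G.ne_of_adj (hM.1 _ he)
      calc 2 = #{x, y} := (card_pair hxy).symm
        _ ≤ _ := card_le_card fun v hv => by
          rcases mem_insert.mp hv with rfl | hv
          · exact mem_filter.mpr ⟨hM.2.1 _ he v (Sym2.mem_mk_left _ _), Sym2.mem_mk_left _ _⟩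
          · rw [mem_singleton.mp hv]
            exact mem_filter.mpr ⟨hM.2.1 _ he y (Sym2.mem_mk_right _ _), Sym2.mem_mk_right _ _⟩
  simpa [mul_comm] using
    card_mul_le_card_mul _ hends fun v _ => hM.card_filter_mem_le_one v

theorem card_le_card_add_half (hM : IsMatchingOn G F M) (A B : Finset V)
    (hAB : ∀ e ∈ M, (∃ a ∈ A, a ∈ e) ∨ ∀ v ∈ e, v ∈ B) : #M ≤ #A + #B / 2 := by
  have hMA : #{e ∈ M | ∃ a ∈ A, a ∈ e} ≤ #A :=
    (hM.of_subset (filter_subset _ M) fun e he => hM.2.1 e (filter_subset _ M he)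
      ).card_le_of_forall_exists_mem A fun e he => (mem_filter.mp he).2
  have hMB : 2 * #{e ∈ M | ¬ ∃ a ∈ A, a ∈ e} ≤ #B :=
    (hM.of_subset (filter_subset _ M) fun e he =>
      (hAB e (mem_filter.mp he).1).resolve_left (mem_filter.mp he).2).two_mul_card_le
  have := card_filter_add_card_filter_not (s := M) (fun e => ∃ a ∈ A, a ∈ e)
  omega

end IsMatchingOn

theorem exists_isMatchingOn_of_injOn [DecidableEq V] {G : SimpleGraph V} (f : ℕ → V) (t : ℕ)
    (hf : Set.InjOn f (Set.Iio (2 * t))) (hadj : ∀ i < t, G.Adj (f (2 * i)) (f (2 * i + 1))) :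
    ∃ M : Finset (Sym2 V), IsMatchingOn G ((range (2 * t)).image f) M ∧ #M = t := by
  set e : ℕ → Sym2 V := fun i => s(f (2 * i), f (2 * i + 1))
  have he : ∀ i < t, ∀ j < t, ∀ v ∈ e i, v ∈ e j → i = j := by
    intro i hi j hj v hvi hvj
    rcases Sym2.mem_iff.mp hvi with rfl | rfl <;> rcases Sym2.mem_iff.mp hvj with h | h <;>
      have := hf (by simp only [Set.mem_Iio]; omega) (by simp only [Set.mem_Iio]; omega) h <;>
      omega
  refine ⟨(range t).image e, ⟨?_, ?_, ?_⟩, ?_⟩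
  · simp only [mem_image, mem_range]
    rintro _ ⟨i, hi, rfl⟩
    exact hadj i hi
  · simp only [mem_image, mem_range]
    rintro _ ⟨i, hi, rfl⟩ v hv
    rcases Sym2.mem_iff.mp hv with rfl | rfl
    exacts [⟨2 * i, by omega, rfl⟩, ⟨2 * i + 1, by omega, rfl⟩]
  · simp only [mem_image, mem_range]
    rintro _ ⟨i, hi, rfl⟩ _ ⟨j, hj, rfl⟩ hne v hvi hvj
    exact hne (congrArg e (he i hi j hj v hvi hvj))
  · rw [card_image_of_injOn, card_range]
    intro i hi j hj hij
    rw [coe_range, Set.mem_Iio] at hi hj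
    exact he i hi j hj _ (Sym2.mem_mk_left _ _) (hij ▸ Sym2.mem_mk_left _ _)

namespace SimpleGraph.Walk.IsCycle

variable [DecidableEq V] {H : SimpleGraph V} {u : V} {w : H.Walk u u}

theorem card_support_toFinset (hw : w.IsCycle) : #w.support.toFinset = w.length := by
  rw [← w.cons_tail_support, List.toFinset_cons,
    insert_eq_of_mem (List.mem_toFinset.mpr (end_mem_tail_support hw.not_nil)),
    List.toFinset_card_of_nodup hw.support_nodup, List.length_tail, length_support,
    Nat.add_sub_cancel]

theorem exists_isMatchingOn_erase {t : ℕ} (hw : w.IsCycle) (hlen : w.length = 2 * t + 1) :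
    ∃ M : Finset (Sym2 V), IsMatchingOn H (w.support.toFinset.erase u) M ∧ #M = t := by
  obtain ⟨M, hM, hcard⟩ := exists_isMatchingOn_of_injOn (fun i => w.getVert (i + 1)) t
    (fun i hi j hj hij => by
      rw [Set.mem_Iio] at hi hj
      have := hw.getVert_injOn (by rw [Set.mem_ofPred_eq]; omega)
        (by rw [Set.mem_ofPred_eq]; omega) hij
      omega)
    (fun i hi => w.adj_getVert_succ (by omega))
  refine ⟨M, hM.mono fun v hv => ?_, hcard⟩
  obtain ⟨i, hi, rfl⟩ := mem_image.mp hv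
  rw [mem_range] at hi
  refine mem_erase.mpr ⟨fun h => ?_, List.mem_toFinset.mpr (w.getVert_mem_support _)⟩
  rw [hw.getVert_endpoint_iff (by omega)] at h
  omega

end SimpleGraph.Walk.IsCycle

section Whisker

variable (H : SimpleGraph V)

@[simp] theorem whisker_adj_inl_inl {a b : V} :
    (whisker H).Adj (Sum.inl a) (Sum.inl b) ↔ H.Adj a b := by
  simp [whisker]

@[simp] theorem whisker_adj_inl_inr {a b : V} :
    (whisker H).Adj (Sum.inl a) (Sum.inr b) ↔ a = b := by
  simpa [whisker] using eq_comm

@[simp] theorem whisker_adj_inr_inl {a b : V} :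
    (whisker H).Adj (Sum.inr a) (Sum.inl b) ↔ a = b := by
  simp [whisker, eq_comm]

@[simp] theorem not_whisker_adj_inr_inr {a b : V} :
    ¬ (whisker H).Adj (Sum.inr a) (Sum.inr b) := by
  simp [whisker]

def whiskerInl : H ↪g whisker H :=
  ⟨Function.Embedding.inl, whisker_adj_inl_inl H⟩

variable {H} [DecidableEq V]

theorem IsMatchingOn.card_le_of_whisker {S B R : Finset V} {M : Finset (Sym2 (V ⊕ V))}
    (hM : IsMatchingOn (whisker H) ((S ∪ B).disjSum R) M) (hBR : Disjoint B R) :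
    #M ≤ #S + #B / 2 := by
  have := hM.card_le_card_add_half (S.map .inl) (B.map .inl) fun e he => by
    induction e using Sym2.ind with
    | _ x y =>
      have hxy := hM.1 _ he
      have hx := hM.2.1 _ he x (Sym2.mem_mk_left x y)
      have hy := hM.2.1 _ he y (Sym2.mem_mk_right x y)
      rcases x with a | a <;> rcases y with b | b <;>
        simp only [SimpleGraph.mem_edgeSet, whisker_adj_inl_inl, whisker_adj_inl_inr,
          whisker_adj_inr_inl, not_whisker_adj_inr_inr, inl_mem_disjSum, inr_mem_disjSum,
          mem_union, mem_map, Function.Embedding.inl_apply, Sym2.mem_iff, exists_exists_and_eq_and,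
          Sum.inl.injEq, reduceCtorEq, or_false, false_or, exists_eq_right, forall_eq_or_imp,
          forall_eq, and_false, false_and, exists_false] at hxy hx hy ⊢
      · rcases hx with ha | ha
        · exact .inl ⟨a, ha, .inl rfl⟩
        rcases hy with hb | hb
        · exact .inl ⟨b, hb, .inr rfl⟩
        · exact .inr ⟨ha, hb⟩
      · subst hxy
        exact hx.resolve_right fun ha => disjoint_left.mp hBR ha hy
      · subst hxy
        exact hy.resolve_right fun hb => disjoint_left.mp hBR hb hx
  simpa using this

theorem exists_isMatchingOn_whisker_disjSum_self (T : Finset V) :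
    ∃ M : Finset (Sym2 (V ⊕ V)), IsMatchingOn (whisker H) (T.disjSum T) M ∧ #M = #T := by
  refine ⟨T.image fun a => s(.inl a, .inr a), ⟨?_, ?_, ?_⟩,
    card_image_of_injective _ fun a b h => by simpa using h⟩
  · simp only [mem_image]
    rintro _ ⟨a, -, rfl⟩
    simp
  · simp only [mem_image]
    rintro _ ⟨a, ha, rfl⟩ v hv
    rcases Sym2.mem_iff.mp hv with rfl | rfl <;> simpa
  · simp only [mem_image]
    rintro _ ⟨a, -, rfl⟩ _ ⟨b, -, rfl⟩ hne v hva hvb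
    rcases Sym2.mem_iff.mp hva with rfl | rfl <;>
      simp only [Sym2.mem_iff, Sum.inl.injEq, Sum.inr.injEq, reduceCtorEq, or_false,
        false_or] at hvb <;>
      subst hvb <;> exact hne rfl

theorem exists_isMatchingOn_whisker {T B : Finset V} {M : Finset (Sym2 V)}
    (hM : IsMatchingOn H B M) (hTB : Disjoint T B) :
    ∃ M' : Finset (Sym2 (V ⊕ V)),
      IsMatchingOn (whisker H) ((T ∪ B).disjSum T) M' ∧ #M' = #T + #M := by
  obtain ⟨MT, hMT, hcard⟩ := exists_isMatchingOn_whisker_disjSum_self (H := H) T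
  have hdisj : Disjoint (T.disjSum T) (B.map (whiskerInl H).toEmbedding) := by
    rw [disjoint_left]
    rintro (a | a) h1 h2 <;> simp only [inl_mem_disjSum, inr_mem_disjSum, whiskerInl, mem_map,
      Function.Embedding.inl_apply, Sum.inl.injEq, reduceCtorEq, and_false, exists_false,
      exists_eq_right] at h1 h2
    exact disjoint_left.mp hTB h1 h2
  refine ⟨MT ∪ M.image (Sym2.map (whiskerInl H)),
    (hMT.union (hM.map (whiskerInl H)) hdisj).mono ?_, ?_⟩
  · rintro (a | a) h <;> simp only [whiskerInl, mem_union, inl_mem_disjSum, inr_mem_disjSum,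
      mem_map, Function.Embedding.inl_apply, Sum.inl.injEq, reduceCtorEq, and_false, exists_false,
      or_false, exists_eq_right] at h ⊢ <;> tauto
  · rw [card_union_of_disjoint (hMT.disjoint (hM.map _) hdisj), hcard,
      card_image_of_injective _ (Sym2.map.injective (whiskerInl H).injective)]

end Whisker

theorem isFacet_mfFace_of_forall_insert [DecidableEq V] {G : SimpleGraph V} {q : ℕ}
    {F : Finset V} (hF : MFFace G q F)
    (h : ∀ z ∉ F, ∃ M : Finset (Sym2 V), IsMatchingOn G (insert z F) M ∧ #M = q) :
    IsFacet (MFFace G q) F := by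
  refine ⟨hF, fun F' hF' hFF' => Subset.antisymm hFF' fun z hz => ?_⟩
  by_contra hzF
  obtain ⟨M, hM, hcard⟩ := h z hzF
  exact hF' ⟨M, hM.mono (insert_subset hz hFF'), hcard⟩

section Facets

variable [Fintype V] [DecidableEq V] {H : SimpleGraph V}

theorem isFacet_disjSum_univ (S : Finset V) :
    IsFacet (MFFace (whisker H) (#S + 1)) (S.disjSum univ) := by
  refine isFacet_mfFace_of_forall_insert (fun ⟨M, hM, hcard⟩ => ?_) fun z hz => ?_
  · have := (hM.mono (by rw [union_empty])).card_le_of_whisker (disjoint_empty_left univ)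
    rw [card_empty] at this
    omega
  · obtain x | x := z
    · have hx : x ∉ S := by simpa using hz
      obtain ⟨M, hM, hcard⟩ := exists_isMatchingOn_whisker_disjSum_self (H := H) (insert x S)
      refine ⟨M, hM.mono ?_, by rw [hcard, card_insert_of_notMem hx]⟩
      rintro (a | a) h <;> simp only [inl_mem_disjSum, inr_mem_disjSum, mem_insert,
        Sum.inl.injEq, reduceCtorEq, mem_univ, or_true] at h ⊢
      exact h
    · simp at hz

theorem isFacet_union_support_disjSum_compl {u : V} {w : H.Walk u u} {t : ℕ} (hw : w.IsCycle)
    (hlen : w.length = 2 * t + 1) {S : Finset V} (hS : Disjoint S w.support.toFinset) :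
    IsFacet (MFFace (whisker H) (#S + t + 1))
      ((S ∪ w.support.toFinset).disjSum w.support.toFinsetᶜ) := by
  set C := w.support.toFinset
  have hmatch : ∀ {y : V} (w' : H.Walk y y), w'.IsCycle → w'.length = 2 * t + 1 →
      w'.support.toFinset = C → ∀ x ∉ S, x ∉ C.erase y → ∃ M : Finset (Sym2 (V ⊕ V)),
        IsMatchingOn (whisker H) ((insert x S ∪ C.erase y).disjSum (insert x S)) M ∧
          #M = #S + t + 1 := by
    intro y w' hw' hlen' hC' x hxS hxC
    obtain ⟨M, hM, hcard⟩ := hw'.exists_isMatchingOn_erase hlen'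
    rw [hC'] at hM
    obtain ⟨M', hM', hcard'⟩ := exists_isMatchingOn_whisker hM
      (disjoint_insert_left.mpr ⟨hxC, disjoint_of_subset_right (erase_subset _ _) hS⟩)
    exact ⟨M', hM', by rw [hcard', hcard, card_insert_of_notMem hxS]; ring⟩
  refine isFacet_mfFace_of_forall_insert (fun ⟨M, hM, hcard⟩ => ?_) fun z hz => ?_
  · have := hM.card_le_of_whisker disjoint_compl_right
    rw [hw.card_support_toFinset, hlen] at this
    omega
  · obtain x | x := z
    · simp only [inl_mem_disjSum, mem_union, not_or] at hz
      obtain ⟨M, hM, hcard⟩ := hmatch w hw hlen rfl x hz.1 fun h => hz.2 (mem_of_mem_erase h)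
      refine ⟨M, hM.mono ?_, hcard⟩
      rintro (a | a) h <;> simp only [insert_union, inl_mem_disjSum, inr_mem_disjSum, mem_insert,
        mem_union, mem_erase, mem_compl, ne_eq, Sum.inl.injEq, reduceCtorEq, false_or] at h ⊢
      · tauto
      · exact h.elim (· ▸ hz.2) fun ha => disjoint_left.mp hS ha
    · have hx : x ∈ w.support := by simpa [C] using hz
      obtain ⟨M, hM, hcard⟩ := hmatch (w.rotate x hx) (hw.rotate hx) (by simp [hlen])
        (by ext; simp [C]) x (fun h => disjoint_left.mp hS h (List.mem_toFinset.mpr hx))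
        (notMem_erase x C)
      refine ⟨M, hM.mono ?_, hcard⟩
      rintro (a | a) h <;> simp only [insert_union, inl_mem_disjSum, inr_mem_disjSum, mem_insert,
        mem_union, mem_erase, mem_compl, ne_eq, Sum.inr.injEq, reduceCtorEq, false_or] at h ⊢
      · rcases h with rfl | h | ⟨-, h⟩
        exacts [.inr (List.mem_toFinset.mpr hx), .inl h, .inr h]
      · exact h.imp_right fun ha => disjoint_left.mp hS ha

end Facets

theorem mfComplex_not_pure_of_oddCycle_general
    {V : Type*} [Fintype V] (H : SimpleGraph V)
    (n : ℕ) (hn : Fintype.card V = n) (ℓ : ℕ) (hodd : Odd ℓ)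
    (hcyc : ∃ (v : V) (w : H.Walk v v), w.IsCycle ∧ w.length = ℓ)
    (q : ℕ) (h1 : (ℓ + 1) / 2 ≤ q) (h2 : q ≤ n - ℓ / 2) :
    (∃ F : Finset (V ⊕ V), IsFacet (MFFace (whisker H) q) F ∧
      F.card = n + q - 1) ∧
    (∃ F : Finset (V ⊕ V), IsFacet (MFFace (whisker H) q) F ∧
      F.card ≤ n + q - 2) := by
  classical
  obtain ⟨v, w, hw, rfl⟩ := hcyc
  obtain ⟨t, ht⟩ := hodd
  set C := w.support.toFinset
  have hC : #C = 2 * t + 1 := hw.card_support_toFinset.trans ht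
  have ht1 : 1 ≤ t := by have := hw.three_le_length; omega
  have hCn : 2 * t + 1 ≤ n := hn ▸ hC ▸ card_le_univ C
  constructor
  · obtain ⟨S, -, hS⟩ := exists_subset_card_eq (s := (univ : Finset V)) (n := q - 1)
      (by rw [card_univ, hn]; omega)
    refine ⟨S.disjSum univ, ?_, ?_⟩
    · convert isFacet_disjSum_univ (H := H) S using 2
      omega
    · rw [card_disjSum, hS, card_univ, hn]
      omega
  · obtain ⟨S, hSsub, hS⟩ := exists_subset_card_eq (s := Cᶜ) (n := q - 1 - t)
      (by rw [card_compl, hn, hC]; omega)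
    have hSC : Disjoint S C := disjoint_of_subset_left hSsub disjoint_compl_left
    refine ⟨(S ∪ C).disjSum Cᶜ, ?_, ?_⟩
    · convert isFacet_union_support_disjSum_compl hw ht hSC using 2
      omega
    · rw [card_disjSum, card_union_of_disjoint hSC, hS, hC, card_compl, hn, hC]
      omega

/-- if `H` contains an odd cycle, `ℓ` is the length of a shortest odd
cycle, and `⌈ℓ/2⌉ ≤ q ≤ n - ⌊ℓ/2⌋`, then `MF^q(W(H))` is not pure: it has a facet
of cardinality `n + q - 1` and a facet of cardinality at most `n + q - 2`. -/
theorem mfComplex_not_pure_of_oddCycle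
    {V : Type*} [Fintype V] [DecidableEq V] (H : SimpleGraph V)
    (n : ℕ) (hn : Fintype.card V = n) (ℓ : ℕ) (hodd : Odd ℓ)
    (hcyc : ∃ (v : V) (w : H.Walk v v), w.IsCycle ∧ w.length = ℓ)
    (hmin : ∀ (v : V) (w : H.Walk v v), w.IsCycle → Odd w.length → ℓ ≤ w.length)
    (q : ℕ) (h1 : (ℓ + 1) / 2 ≤ q) (h2 : q ≤ n - ℓ / 2) :
    (∃ F : Finset (V ⊕ V), IsFacet (MFFace (whisker H) q) F ∧
      F.card = n + q - 1) ∧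
    (∃ F : Finset (V ⊕ V), IsFacet (MFFace (whisker H) q) F ∧
      F.card ≤ n + q - 2) :=
  mfComplex_not_pure_of_oddCycle_general H n hn ℓ hodd hcyc q h1 h2
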